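/- Exponential-moment domination for supermodular functions: Let X_1,...,X_n be {0,1}-valued 1-negatively associated random variables and let X_1*,...,X_n* be mutually independent {0,1}-valued random variables with the same marginals. Then for every monotone non-decreasing supermodular g : {0,1}^n → ℝ and every λ > 0, E[exp(λ·g(X_1,...,X_n))] ≤ E[exp(λ·g(X_1*,...,X_n*))]. -/

import Mathlib

open MeasureTheory ProbabilityTheory Real Finset

/-- A vector is binary if each coordinate is 0 or 1. -/
def BinaryVec {m : ℕ} (x : Fin m → ℝ) : Prop := ∀ i, x i = 0 ∨ x i = 1

/-- Monotone non-decreasing on the Boolean cube. -/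
def MonoCube {m : ℕ} (f : (Fin m → ℝ) → ℝ) : Prop :=
  ∀ x y : Fin m → ℝ, BinaryVec x → BinaryVec y → x ≤ y → f x ≤ f y

/-- Submodular on the Boolean cube: marginal gains are coordinatewise non-increasing. -/
def SubmodCube {m : ℕ} (f : (Fin m → ℝ) → ℝ) : Prop :=
  ∀ (i : Fin m) (x y : Fin m → ℝ), BinaryVec x → BinaryVec y → x ≤ y →
    f (Function.update y i 1) - f (Function.update y i 0) ≤
      f (Function.update x i 1) - f (Function.update x i 0)

/-- Supermodular on the Boolean cube: marginal gains are coordinatewise non-decreasing. -/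
def SupermodCube {m : ℕ} (f : (Fin m → ℝ) → ℝ) : Prop :=
  ∀ (i : Fin m) (x y : Fin m → ℝ), BinaryVec x → BinaryVec y → x ≤ y →
    f (Function.update x i 1) - f (Function.update x i 0) ≤
      f (Function.update y i 1) - f (Function.update y i 0)

/-- 1-negative association for binary random variables: for every coordinate `i`,
every monotone `F` depending only on coordinates `≠ i` and every monotone `G` of `X i`,
`E[F·G] ≤ E[F]·E[G]`. -/
def OneNA {Ω : Type*} [MeasurableSpace Ω] (μ : Measure Ω) {m : ℕ} (X : Fin m → Ω → ℝ) : Prop :=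
  ∀ (i : Fin m) (F : (Fin m → ℝ) → ℝ) (G : ℝ → ℝ),
    Measurable F → MonoCube F →
    (∀ x y : Fin m → ℝ, (∀ j, j ≠ i → x j = y j) → F x = F y) →
    Measurable G → Monotone G →
    ∫ ω, F (fun j => X j ω) * G (X i ω) ∂μ ≤
      (∫ ω, F (fun j => X j ω) ∂μ) * ∫ ω, G (X i ω) ∂μ

/-!
Let `Aᵢ f = avgCoord pᵢ i f` be `f` with its `i`-th argument resampled from a Bernoulli(`pᵢ`)
law, `pᵢ = E Xᵢ`. Writing `f x = f (x[i ↦ 0]) + ∂ᵢf(x) · xᵢ`, where `∂ᵢf` does not depend on `xᵢ`,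
every binary `Y` with mean `p` satisfies
`E f(Y) - E (Aᵢ f)(Y) = E[∂ᵢf(Y) Yᵢ] - E[∂ᵢf(Y)] pᵢ`.
For supermodular `f` the gain `∂ᵢf` is monotone, so 1-negative association makes the right side
`≤ 0` for `X`, while independence makes it `0` for `X*`. Each `Aᵢ` preserves supermodularity, and
`f = exp (λ g)` is supermodular when `g` is monotone and supermodular; after resampling all `n`
coordinates both sides become the same constant.
-/

open Function

section Resampling

variable {ι : Type*} [DecidableEq ι]

def marginalGain (i : ι) (f : (ι → ℝ) → ℝ) (x : ι → ℝ) : ℝ :=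
  f (update x i 1) - f (update x i 0)

def avgCoord (p : ℝ) (i : ι) (f : (ι → ℝ) → ℝ) (x : ι → ℝ) : ℝ :=
  f (update x i 0) + p * marginalGain i f x

def avgCoords (p : ι → ℝ) (L : List ι) (f : (ι → ℝ) → ℝ) : (ι → ℝ) → ℝ :=
  L.foldl (fun h i => avgCoord (p i) i h) f

lemma eq_add_mul_marginalGain {x : ι → ℝ} {i : ι} (hxi : x i = 0 ∨ x i = 1)
    (f : (ι → ℝ) → ℝ) : f x = f (update x i 0) + marginalGain i f x * x i := by
  have hx : update x i (x i) = x := update_eq_self i x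
  rcases hxi with h | h <;> rw [h] at hx <;> simp only [marginalGain, hx, h] <;> ring

lemma marginalGain_avgCoord_self (p : ℝ) (i : ι) (f : (ι → ℝ) → ℝ) :
    marginalGain i (avgCoord p i f) = 0 := by
  funext x
  simp [marginalGain, avgCoord]

lemma marginalGain_avgCoord_comm {i j : ι} (hji : j ≠ i) (p : ℝ) (f : (ι → ℝ) → ℝ) :
    marginalGain j (avgCoord p i f) = avgCoord p i (marginalGain j f) := by
  funext x
  simp only [marginalGain, avgCoord, update_comm hji]
  ring

lemma dependsOn_comp_update {f : (ι → ℝ) → ℝ} {i : ι} {s : Set ι}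
    (hf : DependsOn f (insert i s)) (c : ℝ) : DependsOn (fun x => f (update x i c)) s := by
  intro x y hxy
  refine hf fun j hj => ?_
  rcases eq_or_ne j i with rfl | hji
  · simp
  · simp [update_of_ne hji, hxy j (hj.resolve_left hji)]

lemma dependsOn_marginalGain {f : (ι → ℝ) → ℝ} {i : ι} {s : Set ι}
    (hf : DependsOn f (insert i s)) : DependsOn (marginalGain i f) s := fun _ _ h => by
  simp only [marginalGain, dependsOn_comp_update hf 1 h, dependsOn_comp_update hf 0 h]

lemma dependsOn_avgCoord {f : (ι → ℝ) → ℝ} {i : ι} {s : Set ι}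
    (hf : DependsOn f (insert i s)) (p : ℝ) : DependsOn (avgCoord p i f) s := fun _ _ h => by
  simp only [avgCoord, dependsOn_comp_update hf 0 h, dependsOn_marginalGain hf h]

lemma dependsOn_avgCoords (p : ι → ℝ) :
    ∀ (L : List ι) {f : (ι → ℝ) → ℝ}, DependsOn f {j | j ∈ L} → DependsOn (avgCoords p L f) ∅
  | [], _, hf => by simpa [avgCoords] using hf
  | i :: L, _, hf =>
    dependsOn_avgCoords p L (dependsOn_avgCoord (hf.mono fun _ hj => List.mem_cons.1 hj) (p i))

lemma avgCoords_finRange_eq {m : ℕ} (p : Fin m → ℝ) (f : (Fin m → ℝ) → ℝ) (x y : Fin m → ℝ) :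
    avgCoords p (List.finRange m) f x = avgCoords p (List.finRange m) f y :=
  (dependsOn_avgCoords p _ ((dependsOn_univ f).mono fun j _ => List.mem_finRange j)).empty x y

lemma measurable_marginalGain {f : (ι → ℝ) → ℝ} (hf : Measurable f) (i : ι) :
    Measurable (marginalGain i f) :=
  (hf.comp measurable_update_left).sub (hf.comp measurable_update_left)

lemma measurable_avgCoord {f : (ι → ℝ) → ℝ} (hf : Measurable f) (p : ℝ) (i : ι) :
    Measurable (avgCoord p i f) :=
  (hf.comp measurable_update_left).add ((measurable_marginalGain hf i).const_mul p)

end Resampling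

section BooleanCube

variable {m : ℕ}

lemma BinaryVec.update {x : Fin m → ℝ} (hx : BinaryVec x) (i : Fin m) {c : ℝ}
    (hc : c = 0 ∨ c = 1) : BinaryVec (update x i c) := by
  intro j
  rcases eq_or_ne j i with rfl | hji
  · simpa using hc
  · simpa [update_of_ne hji] using hx j

lemma supermodCube_iff_monoCube_marginalGain {f : (Fin m → ℝ) → ℝ} :
    SupermodCube f ↔ ∀ i, MonoCube (marginalGain i f) :=
  Iff.rfl

lemma MonoCube.const_mul {h : (Fin m → ℝ) → ℝ} (hh : MonoCube h) {c : ℝ} (hc : 0 ≤ c) :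
    MonoCube fun x => c * h x :=
  fun x y hx hy hxy => mul_le_mul_of_nonneg_left (hh x y hx hy hxy) hc

lemma SupermodCube.const_mul {h : (Fin m → ℝ) → ℝ} (hh : SupermodCube h) {c : ℝ} (hc : 0 ≤ c) :
    SupermodCube fun x => c * h x := by
  intro i x y hx hy hxy
  rw [← mul_sub, ← mul_sub]
  exact mul_le_mul_of_nonneg_left (hh i x y hx hy hxy) hc

lemma exp_sub_exp_le_exp_sub_exp {a₀ a₁ b₀ b₁ : ℝ} (h₀ : a₀ ≤ b₀) (ha : a₀ ≤ a₁)
    (h : a₁ - a₀ ≤ b₁ - b₀) : exp a₁ - exp a₀ ≤ exp b₁ - exp b₀ := by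
  have factor : ∀ u v : ℝ, exp v - exp u = exp u * (exp (v - u) - 1) := fun u v => by
    rw [mul_sub, ← exp_add]
    ring_nf
  rw [factor a₀, factor b₀]
  have : 1 ≤ exp (a₁ - a₀) := one_le_exp (sub_nonneg.2 ha)
  exact mul_le_mul (exp_le_exp.2 h₀) (by gcongr) (by linarith) (exp_pos _).le

lemma SupermodCube.exp_comp {h : (Fin m → ℝ) → ℝ} (hs : SupermodCube h) (hm : MonoCube h) :
    SupermodCube fun x => exp (h x) := by
  intro i x y hx hy hxy
  exact exp_sub_exp_le_exp_sub_exp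
    (hm _ _ (hx.update i (.inl rfl)) (hy.update i (.inl rfl))
      (update_le_update_iff.2 ⟨le_rfl, fun j _ => hxy j⟩))
    (hm _ _ (hx.update i (.inl rfl)) (hx.update i (.inr rfl)) (update_le_update_iff'.2 zero_le_one))
    (hs i x y hx hy hxy)

lemma MonoCube.avgCoord {g : (Fin m → ℝ) → ℝ} (hg : MonoCube g) {p : ℝ} (hp₀ : 0 ≤ p)
    (hp₁ : p ≤ 1) (i : Fin m) : MonoCube (avgCoord p i g) := by
  intro x y hx hy hxy
  have hle : ∀ c : ℝ, update x i c ≤ update y i c := fun c =>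
    update_le_update_iff.2 ⟨le_rfl, fun j _ => hxy j⟩
  have h₀ := hg _ _ (hx.update i (.inl rfl)) (hy.update i (.inl rfl)) (hle 0)
  have h₁ := hg _ _ (hx.update i (.inr rfl)) (hy.update i (.inr rfl)) (hle 1)
  simp only [_root_.avgCoord, marginalGain]
  nlinarith

lemma SupermodCube.avgCoord {f : (Fin m → ℝ) → ℝ} (hf : SupermodCube f) {p : ℝ} (hp₀ : 0 ≤ p)
    (hp₁ : p ≤ 1) (i : Fin m) : SupermodCube (avgCoord p i f) := by
  rw [supermodCube_iff_monoCube_marginalGain] at hf ⊢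
  intro j
  rcases eq_or_ne j i with rfl | hji
  · rw [marginalGain_avgCoord_self]
    exact fun _ _ _ _ _ => le_rfl
  · rw [marginalGain_avgCoord_comm hji]
    exact (hf j).avgCoord hp₀ hp₁ i

end BooleanCube

section Probability

variable {Ω : Type*} [MeasurableSpace Ω] {μ : Measure Ω}

lemma integral_nonneg_of_binary {Z : Ω → ℝ} (hZ : ∀ ω, Z ω = 0 ∨ Z ω = 1) :
    0 ≤ ∫ ω, Z ω ∂μ :=
  integral_nonneg fun ω => by rcases hZ ω with h | h <;> simp [h]

lemma integral_le_one_of_binary [IsProbabilityMeasure μ] {Z : Ω → ℝ}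
    (hZ : ∀ ω, Z ω = 0 ∨ Z ω = 1) : ∫ ω, Z ω ∂μ ≤ 1 := by
  calc ∫ ω, Z ω ∂μ ≤ ∫ _, (1 : ℝ) ∂μ :=
        integral_mono_of_nonneg (.of_forall fun ω => by rcases hZ ω with h | h <;> simp [h])
          (integrable_const 1) (.of_forall fun ω => by rcases hZ ω with h | h <;> simp [h])
    _ = 1 := by simp

variable {ι : Type*} [Fintype ι]

lemma integrable_comp_of_binary [IsFiniteMeasure μ] {Y : ι → Ω → ℝ} (hY : ∀ i, Measurable (Y i))
    (hbin : ∀ i ω, Y i ω = 0 ∨ Y i ω = 1) {f : (ι → ℝ) → ℝ} (hf : Measurable f) :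
    Integrable (fun ω => f (fun j => Y j ω)) μ := by
  have hcube : (Set.univ.pi fun _ : ι => ({0, 1} : Set ℝ)).Finite :=
    Set.Finite.pi fun _ => Set.toFinite _
  obtain ⟨C, hC⟩ := (hcube.image fun x => ‖f x‖).bddAbove
  exact .of_bound (hf.comp (measurable_pi_lambda _ hY)).aestronglyMeasurable C
    (.of_forall fun ω => hC ⟨_, fun j _ => hbin j ω, rfl⟩)

lemma ProbabilityTheory.iIndepFun.indepFun_comp_of_dependsOn [DecidableEq ι] {β γ : Type*}
    [MeasurableSpace β] [Nonempty β] [MeasurableSpace γ] {Y : ι → Ω → β} (hY : iIndepFun Y μ)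
    (hmeas : ∀ i, Measurable (Y i)) {F : (ι → β) → γ} (hF : Measurable F) {i : ι}
    (hdep : DependsOn F {i}ᶜ) : IndepFun (fun ω => F (fun j => Y j ω)) (Y i) μ := by
  let S : Finset ι := {i}ᶜ
  let extend : (S → β) → ι → β := fun v j =>
    if h : j ∈ S then v ⟨j, h⟩ else Classical.arbitrary β
  have hextend : Measurable extend := measurable_pi_lambda _ fun j => by
    by_cases h : j ∈ S
    · simpa [extend, h] using measurable_pi_apply (⟨j, h⟩ : S)
    · simp [extend, h]
  have := (hY.indepFun_finset S {i} (by simp [S]) hmeas).comp (hF.comp hextend)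
    (measurable_pi_apply ⟨i, Finset.mem_singleton_self i⟩)
  convert this using 1
  · funext ω
    exact hdep fun j hj => by simp_all [extend, S]
  · rfl

variable [DecidableEq ι]

lemma integral_sub_integral_avgCoord [IsFiniteMeasure μ] {Y : ι → Ω → ℝ}
    (hY : ∀ i, Measurable (Y i)) (hbin : ∀ i ω, Y i ω = 0 ∨ Y i ω = 1)
    {f : (ι → ℝ) → ℝ} (hf : Measurable f) (p : ℝ) (i : ι) :
    ∫ ω, f (fun j => Y j ω) ∂μ - ∫ ω, avgCoord p i f (fun j => Y j ω) ∂μ =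
      ∫ ω, marginalGain i f (fun j => Y j ω) * Y i ω ∂μ -
        (∫ ω, marginalGain i f (fun j => Y j ω) ∂μ) * p := by
  have hf₀ : Integrable (fun ω => f (update (fun j => Y j ω) i 0)) μ :=
    integrable_comp_of_binary hY hbin (hf.comp measurable_update_left)
  have hM : Integrable (fun ω => marginalGain i f (fun j => Y j ω)) μ :=
    integrable_comp_of_binary hY hbin (measurable_marginalGain hf i)
  have hMY : Integrable (fun ω => marginalGain i f (fun j => Y j ω) * Y i ω) μ :=
    integrable_comp_of_binary hY hbin ((measurable_marginalGain hf i).mul (measurable_pi_apply i))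
  have hdecomp : ∫ ω, f (fun j => Y j ω) ∂μ =
      ∫ ω, f (update (fun j => Y j ω) i 0) + marginalGain i f (fun j => Y j ω) * Y i ω ∂μ :=
    integral_congr_ae (.of_forall fun ω =>
      eq_add_mul_marginalGain (x := fun j => Y j ω) (hbin i ω) f)
  simp only [hdecomp, avgCoord]
  rw [integral_add hf₀ hMY, integral_add hf₀ (hM.const_mul p), integral_const_mul]
  ring

end Probability

section Replacement

variable {Ω : Type*} [MeasurableSpace Ω] {μ : Measure Ω}

lemma integral_le_integral_avgCoord_of_oneNA [IsFiniteMeasure μ] {m : ℕ} {X : Fin m → Ω → ℝ}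
    (hX : ∀ i, Measurable (X i)) (hbin : ∀ i ω, X i ω = 0 ∨ X i ω = 1) (hNA : OneNA μ X)
    {f : (Fin m → ℝ) → ℝ} (hf : Measurable f) (hs : SupermodCube f) (i : Fin m) :
    ∫ ω, f (fun j => X j ω) ∂μ ≤ ∫ ω, avgCoord (∫ ω, X i ω ∂μ) i f (fun j => X j ω) ∂μ := by
  have hdep : DependsOn (marginalGain i f) {i}ᶜ :=
    dependsOn_marginalGain ((dependsOn_univ f).mono fun j _ => em (j = i))
  have hcov : ∫ ω, marginalGain i f (fun j => X j ω) * X i ω ∂μ ≤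
      (∫ ω, marginalGain i f (fun j => X j ω) ∂μ) * ∫ ω, X i ω ∂μ :=
    hNA i (marginalGain i f) (fun t => t) (measurable_marginalGain hf i)
      (supermodCube_iff_monoCube_marginalGain.1 hs i) (fun _ _ h => hdep h) measurable_id
      monotone_id
  linarith [integral_sub_integral_avgCoord (μ := μ) hX hbin hf (∫ ω, X i ω ∂μ) i]

lemma integral_eq_integral_avgCoord_of_iIndepFun [IsFiniteMeasure μ] {ι : Type*} [Fintype ι]
    [DecidableEq ι] {Y : ι → Ω → ℝ} (hY : ∀ i, Measurable (Y i))
    (hbin : ∀ i ω, Y i ω = 0 ∨ Y i ω = 1) (hindep : iIndepFun Y μ)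
    {f : (ι → ℝ) → ℝ} (hf : Measurable f) (i : ι) :
    ∫ ω, f (fun j => Y j ω) ∂μ = ∫ ω, avgCoord (∫ ω, Y i ω ∂μ) i f (fun j => Y j ω) ∂μ := by
  have hdep : DependsOn (marginalGain i f) {i}ᶜ :=
    dependsOn_marginalGain ((dependsOn_univ f).mono fun j _ => em (j = i))
  have hcov : ∫ ω, marginalGain i f (fun j => Y j ω) * Y i ω ∂μ =
      (∫ ω, marginalGain i f (fun j => Y j ω) ∂μ) * ∫ ω, Y i ω ∂μ :=
    (hindep.indepFun_comp_of_dependsOn hY (measurable_marginalGain hf i) hdep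
      ).integral_fun_mul_eq_mul_integral
      (integrable_comp_of_binary hY hbin (measurable_marginalGain hf i)).aestronglyMeasurable
      (hY i).aestronglyMeasurable
  linarith [integral_sub_integral_avgCoord (μ := μ) hY hbin hf (∫ ω, Y i ω ∂μ) i]

lemma integral_le_integral_avgCoords_of_oneNA [IsProbabilityMeasure μ] {m : ℕ}
    {X : Fin m → Ω → ℝ} (hX : ∀ i, Measurable (X i)) (hbin : ∀ i ω, X i ω = 0 ∨ X i ω = 1)
    (hNA : OneNA μ X) (L : List (Fin m)) {f : (Fin m → ℝ) → ℝ} (hf : Measurable f)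
    (hs : SupermodCube f) :
    ∫ ω, f (fun j => X j ω) ∂μ ≤
      ∫ ω, avgCoords (fun i => ∫ ω, X i ω ∂μ) L f (fun j => X j ω) ∂μ := by
  induction L generalizing f with
  | nil => exact le_rfl
  | cons i L ih =>
    exact (integral_le_integral_avgCoord_of_oneNA hX hbin hNA hf hs i).trans
      (ih (measurable_avgCoord hf _ i) (hs.avgCoord (integral_nonneg_of_binary (hbin i))
        (integral_le_one_of_binary (hbin i)) i))

lemma integral_eq_integral_avgCoords_of_iIndepFun [IsFiniteMeasure μ] {ι : Type*} [Fintype ι]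
    [DecidableEq ι] {Y : ι → Ω → ℝ} (hY : ∀ i, Measurable (Y i))
    (hbin : ∀ i ω, Y i ω = 0 ∨ Y i ω = 1) (hindep : iIndepFun Y μ) (L : List ι)
    {f : (ι → ℝ) → ℝ} (hf : Measurable f) :
    ∫ ω, f (fun j => Y j ω) ∂μ =
      ∫ ω, avgCoords (fun i => ∫ ω, Y i ω ∂μ) L f (fun j => Y j ω) ∂μ := by
  induction L generalizing f with
  | nil => rfl
  | cons i L ih =>
    exact (integral_eq_integral_avgCoord_of_iIndepFun hY hbin hindep hf i).trans
      (ih (measurable_avgCoord hf _ i))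

end Replacement

/-- Exponential-moment domination for supermodular functions under 1-negative association. -/
theorem exp_moment_domination_supermodular {Ω : Type*} [MeasurableSpace Ω] (μ : Measure Ω)
    [IsProbabilityMeasure μ] {n : ℕ} (X Xstar : Fin n → Ω → ℝ)
    (hX : ∀ i, Measurable (X i)) (hbin : ∀ i ω, X i ω = 0 ∨ X i ω = 1)
    (hNA : OneNA μ X)
    (hXstar : ∀ i, Measurable (Xstar i)) (hbinstar : ∀ i ω, Xstar i ω = 0 ∨ Xstar i ω = 1)
    (hindep : iIndepFun Xstar μ)
    (hmarg : ∀ i, Measure.map (Xstar i) μ = Measure.map (X i) μ) :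
    ∀ (g : (Fin n → ℝ) → ℝ), Measurable g → MonoCube g → SupermodCube g →
      ∀ l : ℝ, 0 < l →
        ∫ ω, Real.exp (l * g (fun j => X j ω)) ∂μ ≤
          ∫ ω, Real.exp (l * g (fun j => Xstar j ω)) ∂μ := by
  intro g hg hmono hsup l hl
  have hΦ : Measurable fun x => exp (l * g x) := measurable_exp.comp (hg.const_mul l)
  have hp : (fun i => ∫ ω, Xstar i ω ∂μ) = fun i => ∫ ω, X i ω ∂μ := funext fun i =>
    (IdentDistrib.mk (hXstar i).aemeasurable (hX i).aemeasurable (hmarg i)).integral_eq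
  set F := avgCoords (fun i => ∫ ω, X i ω ∂μ) (List.finRange n) fun x => exp (l * g x)
  calc ∫ ω, exp (l * g (fun j => X j ω)) ∂μ
      ≤ ∫ ω, F (fun j => X j ω) ∂μ := integral_le_integral_avgCoords_of_oneNA hX hbin hNA _ hΦ
        ((hsup.const_mul hl.le).exp_comp (hmono.const_mul hl.le))
    _ = ∫ ω, F (fun j => Xstar j ω) ∂μ := by
        simp only [avgCoords_finRange_eq _ _ _ 0, F, integral_const, probReal_univ, one_smul]
    _ = ∫ ω, exp (l * g (fun j => Xstar j ω)) ∂μ := by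
        rw [integral_eq_integral_avgCoords_of_iIndepFun hXstar hbinstar hindep _ hΦ, hp]
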